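/- arXiv:0811.0215 — 5 statements merged into one kernel-verified Lean document; each statement's English description precedes it below -/
import Mathlib

section
/- Let Δ̇ be the root system of type B_l realized in Q = ℤα₁ ⊕ ... ⊕ ℤα_l with the bilinear form where long roots have squared length 1. If α, α', and α+α' are all roots in Δ̇, then ε(α,α') = -ε(α',α), where ε is the bimultiplicative cocycle with ε(α_i,α_j) = -1 iff i = j+1. -/
open Finset

/-- The short root `α_i + α_{i+1} + ... + α_l` of `B_l`, as a coefficient vector. -/
def sroot (l : ℕ) (i : Fin l) : Fin l → ℤ := fun k => if i ≤ k then 1 else 0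

/-- The set `Δ_S` of short roots `±(α_i + ... + α_l)` of `B_l`. -/
def ShortS (l : ℕ) : Set (Fin l → ℤ) := {x | ∃ i, x = sroot l i ∨ x = -sroot l i}

/-- The set `Δ_M` of middle-length roots of `B_l`:
`±((α_i+...+α_l) ± (α_j+...+α_l))` for `i < j`. -/
def MidS (l : ℕ) : Set (Fin l → ℤ) :=
  {x | ∃ i j : Fin l, i < j ∧ (x = sroot l i - sroot l j ∨ x = sroot l j - sroot l i ∨
      x = sroot l i + sroot l j ∨ x = -(sroot l i + sroot l j))}

/-- The set `Δ_L = {2γ : γ ∈ Δ_S}` of long roots of the folded system. -/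
def LongS (l : ℕ) : Set (Fin l → ℤ) := {x | ∃ γ ∈ ShortS l, x = 2 • γ}

/-- The root system `Δ̇` of `B_l`. -/
def RootsB (l : ℕ) : Set (Fin l → ℤ) := ShortS l ∪ MidS l

/-- Gram matrix entries of the normalized `B_l` form:
`(α_i,α_i) = 1` for `i < l`, `(α_l,α_l) = 1/2`, `(α_i,α_j) = -1/2` for `|i-j| = 1`,
and `0` for `|i-j| > 1`. -/
def gram (l : ℕ) (i j : Fin l) : ℚ :=
  if i = j then (if (i : ℕ) = l - 1 then 1/2 else 1)
  else if ((i : ℤ) - (j : ℤ)).natAbs = 1 then -1/2 else 0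

/-- The normalized `B_l` bilinear form on coefficient vectors. -/
def formQ (l : ℕ) (x y : Fin l → ℚ) : ℚ := ∑ i, ∑ j, x i * y j * gram l i j

/-- Coercion of an integer coefficient vector to a rational one. -/
def qc {l : ℕ} (x : Fin l → ℤ) : Fin l → ℚ := fun i => (x i : ℚ)

/-- The weight `λ = Σ_{i=1}^l (i/2) α_i` as a coefficient vector. -/
def lamQ (l : ℕ) : Fin l → ℚ := fun i => ((i : ℕ) + 1) / 2

/-- The 2-cocycle `ε` with `ε(α_i,α_j) = -1` iff `i = j+1`, extended bimultiplicatively. -/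
def epsf (l : ℕ) (a b : Fin l → ℤ) : ℤˣ :=
  ∏ i : Fin l, ∏ j : Fin l, (if (i : ℕ) = (j : ℕ) + 1 then (-1 : ℤˣ) else 1) ^ (a i * b j)

/-- Coefficient-wise reduction mod 2 keeping the sign:
`p₀(Σ k_i α_i) = Σ sgn(k_i)(k_i - 2⌊k_i/2⌋) α_i`. -/
def p0 {l : ℕ} (x : Fin l → ℤ) : Fin l → ℤ :=
  fun i => (if 0 ≤ x i then 1 else -1) * (x i % 2)

/-!
Write `E(x, y) = Σ_{i = j + 1} x_i y_j`, so that `ε(x, y) = (-1)^E(x, y)` and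
`ε(α, α') ε(α', α) = (-1)^(E(α, α') + E(α', α))`. With `q(x) = Σ x_i² - E(x, x)`, half the
`A_l` norm, polarization gives `E(α, α') + E(α', α) ≡ q(α) + q(α') + q(α + α') (mod 2)`.
In the basis `e_i = α_i + ... + α_l` the roots of `B_l` are `±e_i` and `±e_i ± e_j`, on which
`q` takes the odd values `1`, `1` and `3`; hence the exponent is odd.
-/

open Matrix

lemma Int.negOnePow_sum {ι : Type*} (s : Finset ι) (f : ι → ℤ) :
    (∑ i ∈ s, f i).negOnePow = ∏ i ∈ s, (f i).negOnePow := by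
  classical
  induction s using Finset.induction_on with
  | empty => rfl
  | insert i s hi ih => rw [sum_insert hi, prod_insert hi, Int.negOnePow_add, ih]

lemma Fin.card_filter_le_val (l c : ℕ) : #{k : Fin l | c ≤ (k : ℕ)} = l - c := by
  have h := card_filter_add_card_filter_not (s := univ) (fun k : Fin l => c ≤ (k : ℕ))
  simp only [not_le, Fin.card_filter_val_lt, card_univ, Fintype.card_fin] at h
  omega

def subdiag (l : ℕ) : Matrix (Fin l) (Fin l) ℤ :=
  Matrix.of fun i j => if (i : ℕ) = j + 1 then 1 else 0

/-- `α_{n+1} + ... + α_l`, which is `0` once `n ≥ l`. -/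
def tailVec (l n : ℕ) : Fin l → ℤ := fun k => if n ≤ (k : ℕ) then 1 else 0

def halfNormA {l : ℕ} (x : Fin l → ℤ) : ℤ := x ⬝ᵥ x - x ⬝ᵥ subdiag l *ᵥ x

section

variable {l : ℕ}

lemma epsf_eq_negOnePow (a b : Fin l → ℤ) : epsf l a b = (a ⬝ᵥ subdiag l *ᵥ b).negOnePow := by
  simp only [epsf, dotProduct, mulVec, Finset.mul_sum, Int.negOnePow_sum]
  refine prod_congr rfl fun i _ => prod_congr rfl fun j _ => ?_
  split_ifs <;> simp [subdiag, *, Int.negOnePow_def]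

lemma sroot_eq_tailVec (i : Fin l) : sroot l i = tailVec l i := rfl

lemma tailVec_dotProduct_tailVec (n m : ℕ) :
    tailVec l n ⬝ᵥ tailVec l m = (l - max n m : ℕ) := by
  simp only [dotProduct, tailVec, ite_mul, one_mul, zero_mul, ← ite_and, ← max_le_iff, sum_boole,
    Fin.card_filter_le_val]

lemma subdiag_mulVec_tailVec (n : ℕ) : subdiag l *ᵥ tailVec l n = tailVec l (n + 1) := by
  ext ⟨_ | k, hk⟩
  · simp [mulVec, dotProduct, subdiag, tailVec]
  · rw [mulVec, dotProduct, sum_eq_single ⟨k, by omega⟩]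
    · simp [subdiag, tailVec]
    · intro j _ hj
      have : k ≠ j := fun h => hj (Fin.ext h.symm)
      simp [subdiag, this]
    · simp

lemma halfNormA_neg (x : Fin l → ℤ) : halfNormA (-x) = halfNormA x := by
  simp [halfNormA, mulVec_neg]

lemma halfNormA_add (x y : Fin l → ℤ) :
    halfNormA (x + y) = halfNormA x + halfNormA y + 2 * (x ⬝ᵥ y)
      - x ⬝ᵥ subdiag l *ᵥ y - y ⬝ᵥ subdiag l *ᵥ x := by
  simp only [halfNormA, add_dotProduct, dotProduct_add, mulVec_add, dotProduct_comm y x]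
  ring

lemma halfNormA_tailVec {n : ℕ} (hn : n < l) : halfNormA (tailVec l n) = 1 := by
  simp only [halfNormA, subdiag_mulVec_tailVec, tailVec_dotProduct_tailVec]
  omega

lemma tailVec_polar {n m : ℕ} (hnm : n < m) (hm : m < l) :
    2 * (tailVec l n ⬝ᵥ tailVec l m) - tailVec l n ⬝ᵥ subdiag l *ᵥ tailVec l m
      - tailVec l m ⬝ᵥ subdiag l *ᵥ tailVec l n = 1 := by
  simp only [subdiag_mulVec_tailVec, tailVec_dotProduct_tailVec]
  omega

lemma halfNormA_tailVec_add {n m : ℕ} (hnm : n < m) (hm : m < l) :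
    halfNormA (tailVec l n + tailVec l m) = 3 := by
  rw [halfNormA_add, halfNormA_tailVec (hnm.trans hm), halfNormA_tailVec hm]
  linarith [tailVec_polar hnm hm]

lemma halfNormA_tailVec_sub {n m : ℕ} (hnm : n < m) (hm : m < l) :
    halfNormA (tailVec l n - tailVec l m) = 1 := by
  rw [sub_eq_add_neg, halfNormA_add, halfNormA_neg, halfNormA_tailVec (hnm.trans hm),
    halfNormA_tailVec hm]
  simp only [dotProduct_neg, mulVec_neg, neg_dotProduct]
  linarith [tailVec_polar hnm hm]

lemma odd_halfNormA_of_mem_rootsB {x : Fin l → ℤ} (hx : x ∈ RootsB l) : Odd (halfNormA x) := by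
  rcases hx with ⟨i, rfl | rfl⟩ | ⟨i, j, hij, rfl | rfl | rfl | rfl⟩ <;>
    simp only [sroot_eq_tailVec, halfNormA_neg]
  · rw [halfNormA_tailVec i.isLt]; decide
  · rw [halfNormA_tailVec i.isLt]; decide
  · rw [halfNormA_tailVec_sub hij j.isLt]; decide
  · rw [← neg_sub, halfNormA_neg, halfNormA_tailVec_sub hij j.isLt]; decide
  · rw [halfNormA_tailVec_add hij j.isLt]; decide
  · rw [halfNormA_tailVec_add hij j.isLt]; decide

lemma odd_subdiag_add_swap {a b : Fin l → ℤ} (ha : Odd (halfNormA a)) (hb : Odd (halfNormA b))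
    (hab : Odd (halfNormA (a + b))) :
    Odd (a ⬝ᵥ subdiag l *ᵥ b + b ⬝ᵥ subdiag l *ᵥ a) := by
  have := halfNormA_add a b
  rw [Int.odd_iff] at *
  omega

end

/-- If `α`, `α'`, and `α + α'` are all roots of `B_l`, then `ε(α,α') = -ε(α',α)`. -/
theorem eps_antisymm_on_roots (l : ℕ) (a b : Fin l → ℤ)
    (ha : a ∈ RootsB l) (hb : b ∈ RootsB l) (hab : a + b ∈ RootsB l) :
    epsf l a b = -epsf l b a := by
  have hodd := odd_subdiag_add_swap (odd_halfNormA_of_mem_rootsB ha)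
    (odd_halfNormA_of_mem_rootsB hb) (odd_halfNormA_of_mem_rootsB hab)
  rw [epsf_eq_negOnePow, epsf_eq_negOnePow, ← Int.negOnePow_succ, Int.negOnePow_eq_iff,
    Int.even_iff]
  rw [Int.odd_iff] at hodd
  omega
end

section
/- Let α ∈ Δ_L, i.e., α = ±2(α_i + ... + α_l) for some i. Then (α,λ) = ±1/2 and for every r ∈ Q, (α, r) ∈ ℤ; consequently (α,α) + 2(α, r+λ) is an odd integer for all r ∈ Q. -/
open Finset

lemma gram_split (l : ℕ) (j k : Fin l) :
    gram l j k = (if j = k then (if (k:ℕ) = l-1 then (1:ℚ)/2 else 1) else 0)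
      + (if (j:ℕ) = (k:ℕ)+1 then -(1/2) else 0) + (if (j:ℕ)+1 = (k:ℕ) then -(1/2) else 0) := by
  unfold gram
  have hj := j.isLt; have hk := k.isLt
  simp only [Fin.ext_iff]
  split_ifs <;> first | omega | norm_num

lemma sum_ite_coe {l : ℕ} (m : ℕ) (f : Fin l → ℚ) :
    ∑ j : Fin l, (if (j:ℕ) = m then f j else 0) = if hm : m < l then f ⟨m, hm⟩ else 0 := by
  split
  · next h =>
    rw [Finset.sum_eq_single (⟨m, h⟩ : Fin l)]
    · simp
    · intro b _ hb; rw [if_neg]; simpa [Fin.ext_iff] using hb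
    · simp
  · next h => exact Finset.sum_eq_zero fun j _ => by rw [if_neg]; omega

lemma crow (l : ℕ) (i k : Fin l) :
    ∑ j : Fin l, (if i ≤ j then (1:ℚ) else 0) * gram l j k
      = (if k = i then 1/2 else 0) - (if (k:ℕ)+1 = (i:ℕ) then 1/2 else 0) := by
  have hi := i.isLt; have hk := k.isLt
  have step : ∀ j : Fin l, (if i ≤ j then (1:ℚ) else 0) * gram l j k
      = (if j = k then (if (i:ℕ) ≤ (k:ℕ) then (if (k:ℕ) = l-1 then (1:ℚ)/2 else 1) else 0) else 0)
      + (if (j:ℕ) = (k:ℕ)+1 then (if (i:ℕ) ≤ (k:ℕ)+1 then -(1:ℚ)/2 else 0) else 0)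
      + (if (j:ℕ)+1 = (k:ℕ) then (if (i:ℕ)+1 ≤ (k:ℕ) then -(1:ℚ)/2 else 0) else 0) := by
    intro j
    rw [gram_split]
    have hjl := j.isLt
    simp only [Fin.le_def, Fin.ext_iff]
    split_ifs <;> first | omega | norm_num
  rw [Finset.sum_congr rfl fun j _ => step j]
  rw [Finset.sum_add_distrib, Finset.sum_add_distrib, Finset.sum_ite_eq' Finset.univ k, sum_ite_coe]
  have h3 : ∑ j : Fin l, (if (j:ℕ)+1 = (k:ℕ) then (if (i:ℕ)+1 ≤ (k:ℕ) then -(1:ℚ)/2 else 0) else 0)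
      = if 1 ≤ (k:ℕ) ∧ (i:ℕ)+1 ≤ (k:ℕ) then -(1:ℚ)/2 else 0 := by
    rcases Nat.eq_zero_or_pos (k:ℕ) with h0 | h0
    · have hz : ∀ j : Fin l, (if (j:ℕ)+1 = (k:ℕ) then (if (i:ℕ)+1 ≤ (k:ℕ) then -(1:ℚ)/2 else 0) else 0) = 0 :=
        fun j => by rw [if_neg]; omega
      simp only [hz, Finset.sum_const_zero]
      rw [if_neg (by omega)]
    · have hc : ∀ j : Fin l, ((j:ℕ)+1 = (k:ℕ)) = ((j:ℕ) = (k:ℕ)-1) := fun j => by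
        simp only [eq_iff_iff]; omega
      simp only [hc]
      rw [sum_ite_coe, dif_pos (by omega : (k:ℕ)-1 < l)]
      split_ifs <;> first | rfl | omega
  rw [h3]
  simp only [Finset.mem_univ, if_true, Fin.ext_iff]
  split_ifs <;> first | omega | norm_num

lemma qc_sroot (l : ℕ) (i : Fin l) : qc (sroot l i) = fun j => if i ≤ j then (1:ℚ) else 0 :=
  funext fun j => by simp [qc, sroot, apply_ite]

lemma key (l : ℕ) (i : Fin l) (y : Fin l → ℚ) :
    formQ l (qc (sroot l i)) y
      = y i / 2 - (∑ j : Fin l, if (j:ℕ)+1 = (i:ℕ) then y j else 0) / 2 := by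
  unfold formQ
  rw [qc_sroot, Finset.sum_comm]
  have h1 : ∀ k : Fin l, (∑ j : Fin l, (if i ≤ j then (1:ℚ) else 0) * y k * gram l j k)
      = y k * ((if k = i then 1/2 else 0) - (if (k:ℕ)+1 = (i:ℕ) then 1/2 else 0)) := by
    intro k
    rw [← crow, Finset.mul_sum]
    exact Finset.sum_congr rfl fun j _ => by ring
  rw [Finset.sum_congr rfl fun k _ => h1 k]
  have h2 : ∀ k : Fin l, y k * ((if k = i then (1:ℚ)/2 else 0) - (if (k:ℕ)+1 = (i:ℕ) then 1/2 else 0))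
      = (if k = i then y k / 2 else 0) - (if (k:ℕ)+1 = (i:ℕ) then y k / 2 else 0) := fun k => by
    split_ifs <;> ring
  rw [Finset.sum_congr rfl fun k _ => h2 k, Finset.sum_sub_distrib,
    Finset.sum_ite_eq' Finset.univ i (fun k => y k / 2)]
  simp only [Finset.mem_univ, if_true]
  congr 1
  rw [Finset.sum_div]
  exact Finset.sum_congr rfl fun k _ => by split_ifs <;> simp

lemma formQ_mulleft (l : ℕ) (c : ℚ) (x y : Fin l → ℚ) :
    formQ l (fun k => c * x k) y = c * formQ l x y := by
  unfold formQ
  rw [Finset.mul_sum]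
  exact Finset.sum_congr rfl fun j _ => by
    rw [Finset.mul_sum]; exact Finset.sum_congr rfl fun k _ => by ring

lemma formQ_mulright (l : ℕ) (c : ℚ) (x y : Fin l → ℚ) :
    formQ l x (fun k => c * y k) = c * formQ l x y := by
  unfold formQ
  rw [Finset.mul_sum]
  exact Finset.sum_congr rfl fun j _ => by
    rw [Finset.mul_sum]; exact Finset.sum_congr rfl fun k _ => by ring

lemma formQ_addright (l : ℕ) (x y z : Fin l → ℚ) :
    formQ l x (y + z) = formQ l x y + formQ l x z := by
  unfold formQ
  rw [← Finset.sum_add_distrib]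
  refine Finset.sum_congr rfl fun j _ => ?_
  rw [← Finset.sum_add_distrib]
  exact Finset.sum_congr rfl fun k _ => by simp only [Pi.add_apply]; ring

lemma key_lam (l : ℕ) (i : Fin l) : formQ l (qc (sroot l i)) (lamQ l) = 1/4 := by
  rw [key]
  have hT : (∑ j : Fin l, if (j:ℕ)+1 = (i:ℕ) then lamQ l j else 0) = ((i:ℕ):ℚ)/2 := by
    rcases Nat.eq_zero_or_pos (i:ℕ) with h0 | h0
    · have hz : ∀ j : Fin l, (if (j:ℕ)+1 = (i:ℕ) then lamQ l j else 0) = 0 :=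
        fun j => by rw [if_neg]; omega
      simp only [hz, Finset.sum_const_zero, h0]
      norm_num
    · have hc : ∀ j : Fin l, ((j:ℕ)+1 = (i:ℕ)) = ((j:ℕ) = (i:ℕ)-1) := fun j => by
        simp only [eq_iff_iff]; omega
      simp only [hc]
      rw [sum_ite_coe, dif_pos (by omega : (i:ℕ)-1 < l)]
      show ((((i:ℕ)-1 : ℕ) : ℚ) + 1) / 2 = ((i:ℕ):ℚ)/2
      rw [Nat.cast_sub h0]
      push_cast
      ring
  rw [hT]
  show (((i:ℕ):ℚ) + 1)/2/2 - _ = 1/4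
  ring

lemma key_self (l : ℕ) (i : Fin l) : formQ l (qc (sroot l i)) (qc (sroot l i)) = 1/2 := by
  rw [key, qc_sroot]
  have hz : ∀ j : Fin l, (if (j:ℕ)+1 = (i:ℕ) then (if i ≤ j then (1:ℚ) else 0) else 0) = 0 :=
    fun j => by
      simp only [Fin.le_def]
      split_ifs <;> first | omega | rfl
  simp only [hz, Finset.sum_const_zero, if_pos (le_refl i)]
  norm_num


/-- For `α ∈ Δ_L`: `(α,λ) = ±1/2`, `(α,r) ∈ ℤ` for all `r ∈ Q`, and
`(α,α) + 2(α, r+λ)` is an odd integer. -/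
theorem long_root_pairing (l : ℕ) (a : Fin l → ℤ) (ha : a ∈ LongS l) :
    (formQ l (qc a) (lamQ l) = 1/2 ∨ formQ l (qc a) (lamQ l) = -1/2) ∧
    (∀ r : Fin l → ℤ, ∃ m : ℤ, formQ l (qc a) (qc r) = m) ∧
    (∀ r : Fin l → ℤ, ∃ m : ℤ, Odd m ∧
      formQ l (qc a) (qc a) + 2 * formQ l (qc a) (qc r + lamQ l) = m) := by
  obtain ⟨γ, ⟨i, hγ⟩, rfl⟩ := ha
  obtain ⟨e, he, hqa⟩ : ∃ e : ℤ, (e = 1 ∨ e = -1) ∧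
      qc (2 • γ) = fun k => ((2*e : ℤ) : ℚ) * qc (sroot l i) k := by
    rcases hγ with h | h
    · exact ⟨1, Or.inl rfl, funext fun k => by
        simp only [qc, h, Pi.smul_apply, smul_eq_mul]; norm_cast⟩
    · exact ⟨-1, Or.inr rfl, funext fun k => by
        simp only [qc, h, Pi.smul_apply, Pi.neg_apply, nsmul_eq_mul]
        push_cast
        ring⟩
  have hform : ∀ y, formQ l (qc (2 • γ)) y = ((2*e:ℤ):ℚ) * formQ l (qc (sroot l i)) y :=
    fun y => by rw [hqa, formQ_mulleft]
  have hint : ∀ r : Fin l → ℤ, ∃ M : ℤ, formQ l (qc (sroot l i)) (qc r) = (M:ℚ)/2 := by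
    intro r
    refine ⟨r i - ∑ j : Fin l, if (j:ℕ)+1 = (i:ℕ) then r j else 0, ?_⟩
    rw [key]
    simp only [qc]
    push_cast [apply_ite (Int.cast : ℤ → ℚ)]
    ring
  have haa : formQ l (qc (2 • γ)) (qc (2 • γ)) = 2 := by
    rw [hform, hqa, formQ_mulright, key_self]
    rcases he with rfl | rfl <;> norm_num
  refine ⟨?_, ?_, ?_⟩
  · rw [hform, key_lam]
    rcases he with rfl | rfl <;> [left; right] <;> norm_num
  · intro r
    obtain ⟨M, hM⟩ := hint r
    refine ⟨e * M, ?_⟩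
    rw [hform, hM]
    push_cast
    ring
  · intro r
    obtain ⟨M, hM⟩ := hint r
    refine ⟨2 + 2*e*M + e, ?_, ?_⟩
    · rcases he with rfl | rfl
      · exact ⟨M + 1, by ring⟩
      · exact ⟨-M, by ring⟩
    · rw [haa, formQ_addright, hform, hform, hM, key_lam]
      push_cast
      ring
end

section
/- If b ∈ Δ_S, a ∈ Δ_L, and a + b ∈ Δ_S, then a = -2b. -/
open Finset

/-- If `b ∈ Δ_S`, `a ∈ Δ_L`, and `a + b ∈ Δ_S`, then `a = -2b`. -/
theorem long_short_short (l : ℕ) (a b : Fin l → ℤ)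
    (hb : b ∈ ShortS l) (ha : a ∈ LongS l) (hab : a + b ∈ ShortS l) :
    a = -(2 • b) := by
  obtain ⟨i, hi⟩ := hb
  obtain ⟨γ, ⟨j, hj⟩, rfl⟩ := ha
  obtain ⟨k, hk⟩ := hab
  have hl : 0 < l := i.pos
  set last : Fin l := ⟨l - 1, by omega⟩ with hlast
  have hle : ∀ m : Fin l, m ≤ last := fun m => by
    simp only [Fin.le_def, hlast]
    omega
  rcases hi with rfl | rfl <;> rcases hj with rfl | rfl <;> rcases hk with hk | hk
  · have h := congrFun hk last
    simp [sroot, hle] at h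
  · have h := congrFun hk last
    simp [sroot, hle] at h
  · have h := congrFun hk last
    simp [sroot, hle] at h
  · -- 2•(-s j) + s i = -s k : derive i = j
    have h1 := congrFun hk i
    have h2 := congrFun hk j
    simp only [Pi.add_apply, Pi.smul_apply, Pi.neg_apply, sroot, two_smul, le_refl,
      if_pos] at h1 h2
    have hji : j ≤ i := by split_ifs at h1 <;> first | assumption | omega
    have hij : i ≤ j := by split_ifs at h2 <;> first | assumption | omega
    have : i = j := le_antisymm hij hji
    subst this
    simp
  · -- 2•(s j) + (-s i) = s k : derive i = j
    have h1 := congrFun hk i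
    have h2 := congrFun hk j
    simp only [Pi.add_apply, Pi.smul_apply, Pi.neg_apply, sroot, two_smul, le_refl,
      if_pos] at h1 h2
    have hji : j ≤ i := by split_ifs at h1 <;> first | assumption | omega
    have hij : i ≤ j := by split_ifs at h2 <;> first | assumption | omega
    have : i = j := le_antisymm hij hji
    subst this
    simp
  · have h := congrFun hk last
    simp [sroot, hle] at h
  · have h := congrFun hk last
    simp [sroot, hle] at h
  · have h := congrFun hk last
    simp [sroot, hle] at h
end

section
/- Define on Q the coset-valued function q(r) = (r+λ, r+λ) mod 1 ∈ ℚ/ℤ. Then for a ∈ Δ_L and any r ∈ Q, q(r+a) - q(r) ≡ (a,a) + 2(a,r+λ) ≡ 0 mod 1 but (r+a+λ,r+a+λ) - (r+λ,r+λ) is an odd integer; i.e., the degree shift (1/2)[(a+r+λ,a+r+λ) - (r+λ,r+λ)] lies in ℤ + 1/2 for a ∈ Δ_L, in (1/2)ℤ for a ∈ Δ_S, and in (1/2)ℤ for a ∈ Δ_M. -/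
open Finset

/-! In the coordinates `ε_1, …, ε_l` with `α_k = ε_k - ε_{k+1}` (`k < l`) and `α_l = ε_l`,
the normalized form is half the standard dot product, `λ = (1/2, …, 1/2)` and `Q = ℤ^l`.
If `u` and `x` are the `ε`-coordinates of `a` and `r`, then `2 D(a, r) = ∑ u_k (2 x_k + u_k + 1)`,
which is even because every `u_k (u_k + 1)` is; so `D(a, r) ∈ ℤ` for all `a ∈ Q`. A long root
`a = ±2 ε_i` gives `2 D(a, r) = ±2 (2 x_i ± 2 + 1)`, so there `D(a, r)` is odd. -/

open Matrix

-- Passes from `α`-coordinates to `ε`-coordinates: column `j` is `ε_j - ε_{j+1}`.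
def epsMatrix (R : Type*) [Ring R] (l : ℕ) : Matrix (Fin l) (Fin l) R :=
  Matrix.of fun k j => if (k : ℕ) = j then 1 else if (k : ℕ) = j + 1 then -1 else 0

lemma epsMatrix_mulVec_apply {R : Type*} [Ring R] {l : ℕ} (v : Fin l → R) (k : Fin l) :
    (epsMatrix R l *ᵥ v) k = v k - if h : (k : ℕ) = 0 then 0 else v ⟨k - 1, by omega⟩ := by
  simp only [Matrix.mulVec, dotProduct, epsMatrix, Matrix.of_apply]
  split_ifs with hk
  · rw [Fintype.sum_eq_single k fun j hj => ?_]
    · simp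
    · have : (k : ℕ) ≠ j := fun h => hj (Fin.ext h.symm)
      simp [this]; omega
  · rw [Finset.sum_eq_add k ⟨k - 1, by omega⟩ (by simp [Fin.ext_iff]; omega)
      (fun j _ hj => ?_) (by simp) (by simp)]
    · simp only [if_true, one_mul]
      rw [if_neg (by omega), if_pos (by omega), neg_one_mul, sub_eq_add_neg]
    · simp only [ne_eq, Fin.ext_iff] at hj
      rw [if_neg (by omega), if_neg (by omega), zero_mul]

lemma gram_eq_half_transpose_mul (l : ℕ) :
    Matrix.of (gram l) = (1 / 2 : ℚ) • ((epsMatrix ℚ l)ᵀ * epsMatrix ℚ l) := by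
  ext i j
  set e : ℕ → ℕ → ℚ := fun k j => if k = j then 1 else if k = j + 1 then -1 else 0
  have hprod : ∀ k : ℕ, e k i * e k j =
      (if k = i then e i j else 0) + (if k = i + 1 then -e (i + 1) j else 0) := by
    intro k; simp only [e]; split_ifs <;> first | omega | ring
  have hsum : ((epsMatrix ℚ l)ᵀ * epsMatrix ℚ l) i j = ∑ k ∈ range l, e k i * e k j :=
    Fin.sum_univ_eq_sum_range (fun k => e k i * e k j) l
  rw [Matrix.smul_apply, hsum, Finset.sum_congr rfl fun k _ => hprod k, Finset.sum_add_distrib,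
    Finset.sum_ite_eq', Finset.sum_ite_eq']
  simp only [Matrix.of_apply, _root_.gram, e, Finset.mem_range, Fin.ext_iff]
  have := i.2; have := j.2
  split_ifs <;> first | omega | norm_num

lemma formQ_eq_half_dotProduct (l : ℕ) (x y : Fin l → ℚ) :
    formQ l x y = (1 / 2) * (epsMatrix ℚ l *ᵥ x ⬝ᵥ epsMatrix ℚ l *ᵥ y) := by
  have hmat : formQ l x y = x ⬝ᵥ Matrix.of (gram l) *ᵥ y := by
    simp only [formQ, dotProduct, mulVec, Matrix.of_apply, Finset.mul_sum]
    exact Finset.sum_congr rfl fun i _ => Finset.sum_congr rfl fun j _ => by ring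
  rw [hmat, gram_eq_half_transpose_mul, smul_mulVec, dotProduct_smul, ← mulVec_mulVec,
    dotProduct_mulVec, vecMul_transpose, smul_eq_mul]

lemma formQ_add_self_sub (l : ℕ) (u w : Fin l → ℚ) :
    formQ l (u + w) (u + w) - formQ l w w = formQ l u u + 2 * formQ l u w := by
  simp only [formQ_eq_half_dotProduct, mulVec_add, dotProduct_add, add_dotProduct,
    dotProduct_comm (epsMatrix ℚ l *ᵥ w) (epsMatrix ℚ l *ᵥ u)]
  ring

lemma qc_add {l : ℕ} (a b : Fin l → ℤ) : qc (a + b) = qc a + qc b := by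
  funext i; simp [qc]

lemma epsMatrix_mulVec_qc {l : ℕ} (v : Fin l → ℤ) :
    epsMatrix ℚ l *ᵥ qc v = qc (epsMatrix ℤ l *ᵥ v) := by
  funext k
  simp only [epsMatrix_mulVec_apply, qc]
  split_ifs <;> push_cast <;> rfl

lemma epsMatrix_mulVec_lamQ (l : ℕ) : epsMatrix ℚ l *ᵥ lamQ l = fun _ => 1 / 2 := by
  funext k
  rw [epsMatrix_mulVec_apply]
  simp only [lamQ]
  split_ifs with hk
  · rw [hk]; norm_num
  · rw [Nat.cast_sub (by omega)]; ring

lemma epsMatrix_mulVec_sroot (l : ℕ) (i : Fin l) :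
    epsMatrix ℤ l *ᵥ sroot l i = Pi.single i 1 := by
  funext k
  rw [epsMatrix_mulVec_apply, Pi.single_apply]
  simp only [sroot, Fin.le_def, Fin.ext_iff]
  split_ifs <;> omega

lemma epsMatrix_mulVec_of_mem_shortS {l : ℕ} {γ : Fin l → ℤ} (hγ : γ ∈ ShortS l) :
    ∃ i σ, (σ = 1 ∨ σ = -1) ∧ epsMatrix ℤ l *ᵥ γ = Pi.single i σ := by
  obtain ⟨i, rfl | rfl⟩ := hγ
  · exact ⟨i, 1, .inl rfl, epsMatrix_mulVec_sroot l i⟩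
  · exact ⟨i, -1, .inr rfl, by rw [mulVec_neg, epsMatrix_mulVec_sroot, Pi.single_neg]⟩

def normSqDiff (l : ℕ) (a r : Fin l → ℤ) : ℚ :=
  formQ l (qc (a + r) + lamQ l) (qc (a + r) + lamQ l) - formQ l (qc r + lamQ l) (qc r + lamQ l)

lemma normSqDiff_eq (l : ℕ) (a r : Fin l → ℤ) :
    normSqDiff l a r = formQ l (qc a) (qc a) + 2 * formQ l (qc a) (qc r + lamQ l) := by
  rw [normSqDiff, qc_add, add_assoc, formQ_add_self_sub]

lemma two_mul_normSqDiff (l : ℕ) (a r : Fin l → ℤ) :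
    2 * normSqDiff l a r = ∑ k, ((epsMatrix ℤ l *ᵥ a) k : ℚ) *
      (2 * (epsMatrix ℤ l *ᵥ r) k + (epsMatrix ℤ l *ᵥ a) k + 1) := by
  simp only [normSqDiff, formQ_eq_half_dotProduct, mulVec_add, epsMatrix_mulVec_qc,
    epsMatrix_mulVec_lamQ]
  rw [← mul_sub, ← mul_assoc, dotProduct, dotProduct, ← Finset.sum_sub_distrib]
  norm_num only [one_mul]
  refine Finset.sum_congr rfl fun k _ => ?_
  simp only [qc, Pi.add_apply]
  push_cast
  ring

lemma normSqDiff_isInt (l : ℕ) (a r : Fin l → ℤ) : ∃ m : ℤ, normSqDiff l a r = m := by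
  set u := epsMatrix ℤ l *ᵥ a
  set x := epsMatrix ℤ l *ᵥ r
  choose c hc using fun k => Int.even_mul_succ_self (u k)
  refine ⟨∑ k, (u k * x k + c k), mul_left_cancel₀ (two_ne_zero (α := ℚ)) ?_⟩
  rw [two_mul_normSqDiff, Int.cast_sum, Finset.mul_sum]
  refine Finset.sum_congr rfl fun k _ => ?_
  have hck : (u k : ℚ) * (u k + 1) = c k + c k := by exact_mod_cast hc k
  push_cast
  linear_combination hck

lemma two_mul_normSqDiff_of_mulVec_eq_single {l : ℕ} {a : Fin l → ℤ} {i : Fin l} {c : ℤ}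
    (ha : epsMatrix ℤ l *ᵥ a = Pi.single i c) (r : Fin l → ℤ) :
    2 * normSqDiff l a r = c * (2 * (epsMatrix ℤ l *ᵥ r) i + c + 1) := by
  rw [two_mul_normSqDiff, ha, Fintype.sum_eq_single i fun k hk => by simp [hk]]
  simp

lemma normSqDiff_two_smul_odd {l : ℕ} {γ : Fin l → ℤ} (hγ : γ ∈ ShortS l) (r : Fin l → ℤ) :
    ∃ m : ℤ, Odd m ∧ normSqDiff l (2 • γ) r = m := by
  obtain ⟨i, σ, hσ, hγ⟩ := epsMatrix_mulVec_of_mem_shortS hγ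
  have h2γ : epsMatrix ℤ l *ᵥ (2 • γ) = Pi.single i (2 * σ) := by
    rw [mulVec_smul, hγ, ← Pi.single_smul, nsmul_eq_mul, Nat.cast_ofNat]
  set x := (epsMatrix ℤ l *ᵥ r) i
  refine ⟨σ * (2 * x + 2 * σ + 1), ?_, mul_left_cancel₀ (two_ne_zero (α := ℚ)) ?_⟩
  · have hσodd : Odd σ := by rcases hσ with rfl | rfl <;> decide
    exact hσodd.mul ⟨x + σ, by ring⟩
  · rw [two_mul_normSqDiff_of_mulVec_eq_single h2γ]
    push_cast
    ring

/-- Degree shifts of vertex operators (Lemma 4.2): writing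
`D(a,r) = (a+r+λ, a+r+λ) - (r+λ, r+λ) = (a,a) + 2(a, r+λ)`, for `a ∈ Δ_L` the
quantity `D(a,r)` is an odd integer (so `D(a,r)/2 ∈ ℤ + 1/2`), while for
`a ∈ Δ_S` and `a ∈ Δ_M` the quantity `D(a,r)/2` lies in `(1/2)ℤ`. -/
theorem degree_shift (l : ℕ) :
    (∀ a ∈ LongS l, ∀ r : Fin l → ℤ,
      formQ l (qc (a + r) + lamQ l) (qc (a + r) + lamQ l)
          - formQ l (qc r + lamQ l) (qc r + lamQ l)
        = formQ l (qc a) (qc a) + 2 * formQ l (qc a) (qc r + lamQ l) ∧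
      (∃ m : ℤ, Odd m ∧
        formQ l (qc (a + r) + lamQ l) (qc (a + r) + lamQ l)
          - formQ l (qc r + lamQ l) (qc r + lamQ l) = m) ∧
      (∃ m : ℤ, (1/2) * (formQ l (qc (a + r) + lamQ l) (qc (a + r) + lamQ l)
          - formQ l (qc r + lamQ l) (qc r + lamQ l)) = m + 1/2)) ∧
    (∀ a ∈ ShortS l, ∀ r : Fin l → ℤ, ∃ m : ℤ,
      (1/2) * (formQ l (qc (a + r) + lamQ l) (qc (a + r) + lamQ l)
          - formQ l (qc r + lamQ l) (qc r + lamQ l)) = (m : ℚ) / 2) ∧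
    (∀ a ∈ MidS l, ∀ r : Fin l → ℤ, ∃ m : ℤ,
      (1/2) * (formQ l (qc (a + r) + lamQ l) (qc (a + r) + lamQ l)
          - formQ l (qc r + lamQ l) (qc r + lamQ l)) = (m : ℚ) / 2) := by
  refine ⟨fun a ha r => ?_, fun a _ r => ?_, fun a _ r => ?_⟩
  · obtain ⟨γ, hγ, rfl⟩ := ha
    obtain ⟨_, ⟨k, rfl⟩, hD⟩ := normSqDiff_two_smul_odd hγ r
    refine ⟨normSqDiff_eq l _ r, ⟨_, odd_two_mul_add_one k, hD⟩, k, ?_⟩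
    change 1 / 2 * normSqDiff l _ r = _
    rw [hD]
    push_cast
    ring
  all_goals
    obtain ⟨m, hD⟩ := normSqDiff_isInt l a r
    exact ⟨m, by change 1 / 2 * normSqDiff l a r = _; rw [hD]; ring⟩
end

section
/- Let Q be the B_l root lattice with the normalized bilinear form and λ = Σ_{i=1}^l (i/2)α_i. If α ∈ Q satisfies (α, α_i) ≥ 0 for all i = 1,...,l and (α, α₁ + ... + α_l) ≤ 1/4, then α = 0. -/
open Finset

/-- Integer version of twice the Gram matrix. -/
def g2 (l : ℕ) (p i : Fin l) : ℤ :=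
  if p = i then (if (p : ℕ) = l - 1 then 1 else 2)
  else if ((p : ℤ) - (i : ℤ)).natAbs = 1 then -1 else 0

lemma g2_cast (l : ℕ) (p i : Fin l) : ((g2 l p i : ℤ) : ℚ) = 2 * gram l p i := by
  unfold g2 gram
  split_ifs <;> norm_num

lemma formQ_basis (l : ℕ) (a : Fin l → ℤ) (i : Fin l) :
    formQ l (qc a) (fun k => if k = i then 1 else 0) = ∑ p, (a p : ℚ) * gram l p i := by
  unfold formQ qc
  refine Finset.sum_congr rfl fun p _ => ?_
  rw [Finset.sum_eq_single i]
  · simp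
  · intro q _ hq; simp [hq]
  · simp

/-- If `α ∈ Q` satisfies `(α, α_i) ≥ 0` for all `i` and `(α, α₁ + ... + α_l) ≤ 1/4`,
then `α = 0`. -/
theorem highest_weight_unique (l : ℕ) (a : Fin l → ℤ)
    (h1 : ∀ i : Fin l, 0 ≤ formQ l (qc a) (fun k => if k = i then 1 else 0))
    (h2 : formQ l (qc a) (fun _ => 1) ≤ 1/4) :
    a = 0 := by
  classical
  rcases Nat.eq_zero_or_pos l with hl0 | hlpos
  · subst hl0; funext i; exact i.elim0
  -- the extended coefficient function
  set A : ℕ → ℤ := fun n => if h : n < l then a ⟨n, h⟩ else 0 with hA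
  have hAa : ∀ i : Fin l, A (i : ℕ) = a i := by
    intro i; simp only [hA, dif_pos i.isLt]
  -- the integer quantities S i = 2 (α, α_i)
  set S : Fin l → ℤ := fun i => ∑ p, a p * g2 l p i with hSdef
  have hScast : ∀ i : Fin l, ((S i : ℤ) : ℚ) = 2 * ∑ p, (a p : ℚ) * gram l p i := by
    intro i
    simp only [hSdef]
    push_cast
    rw [Finset.mul_sum]
    refine Finset.sum_congr rfl fun p _ => ?_
    rw [g2_cast]; ring
  -- each S i ≥ 0
  have hS0 : ∀ i : Fin l, 0 ≤ S i := by
    intro i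
    have := h1 i
    rw [formQ_basis] at this
    have h2' : (0 : ℚ) ≤ ((S i : ℤ) : ℚ) := by rw [hScast]; linarith
    exact_mod_cast h2'
  -- sum of S i ≤ 1/2, hence = 0
  have hsum : ∑ i, S i = 0 := by
    have hsc : ((∑ i, S i : ℤ) : ℚ) = 2 * formQ l (qc a) (fun _ => 1) := by
      push_cast
      calc (∑ i, ((S i : ℤ) : ℚ)) = ∑ i, 2 * ∑ p, (a p : ℚ) * gram l p i :=
            Finset.sum_congr rfl fun i _ => hScast i
        _ = 2 * ∑ i, ∑ p, (a p : ℚ) * gram l p i := by rw [Finset.mul_sum]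
        _ = 2 * ∑ p, ∑ i, (a p : ℚ) * gram l p i := by rw [Finset.sum_comm]
        _ = 2 * formQ l (qc a) (fun _ => 1) := by
            unfold formQ qc
            congr 1
            exact Finset.sum_congr rfl fun p _ => Finset.sum_congr rfl fun i _ => by ring
    have hle : ((∑ i, S i : ℤ) : ℚ) ≤ 1/2 := by rw [hsc]; linarith
    have hge : (0 : ℤ) ≤ ∑ i, S i := Finset.sum_nonneg fun i _ => hS0 i
    have : (∑ i, S i : ℤ) < 1 := by
      by_contra h
      push_neg at h
      have : (1 : ℚ) ≤ ((∑ i, S i : ℤ) : ℚ) := by exact_mod_cast h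
      linarith
    omega
  have hSz : ∀ i : Fin l, S i = 0 := by
    intro i
    have := (Finset.sum_eq_zero_iff_of_nonneg (fun i _ => hS0 i)).mp hsum
    exact this i (Finset.mem_univ i)
  -- evaluate S i explicitly
  have hSval : ∀ i : Fin l, S i =
      (if (i : ℕ) = l - 1 then 1 else 2) * A (i : ℕ)
        + (- A ((i : ℕ) + 1))
        + (-(if (i : ℕ) = 0 then 0 else A ((i : ℕ) - 1))) := by
    intro i
    have hterm : ∀ p : Fin l, a p * g2 l p i =
        (if p = i then (if (i : ℕ) = l - 1 then 1 else 2) * a p else 0)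
        + (if (p : ℕ) = (i : ℕ) + 1 then -a p else 0)
        + (if (p : ℕ) + 1 = (i : ℕ) then -a p else 0) := by
      intro p
      unfold g2
      by_cases hpi : p = i
      · subst hpi
        have h1' : ¬ ((p : ℕ) = (p : ℕ) + 1) := by omega
        have h2' : ¬ ((p : ℕ) + 1 = (p : ℕ)) := by omega
        rw [if_pos rfl, if_pos rfl, if_neg h1', if_neg h2']
        ring
      · have hne : (p : ℕ) ≠ (i : ℕ) := fun h => hpi (Fin.ext h)
        by_cases hab : ((p : ℤ) - (i : ℤ)).natAbs = 1
        · have hd : (p : ℕ) = (i : ℕ) + 1 ∨ (p : ℕ) + 1 = (i : ℕ) := by omega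
          rcases hd with h | h
          · have h' : ¬ ((p : ℕ) + 1 = (i : ℕ)) := by omega
            rw [if_neg hpi, if_pos hab, if_neg hpi, if_pos h, if_neg h']
            ring
          · have h' : ¬ ((p : ℕ) = (i : ℕ) + 1) := by omega
            rw [if_neg hpi, if_pos hab, if_neg hpi, if_neg h', if_pos h]
            ring
        · have h1' : ¬ ((p : ℕ) = (i : ℕ) + 1) := by omega
          have h2' : ¬ ((p : ℕ) + 1 = (i : ℕ)) := by omega
          rw [if_neg hpi, if_neg hab, if_neg hpi, if_neg h1', if_neg h2']
          ring
    simp only [hSdef]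
    rw [Finset.sum_congr rfl (fun p _ => hterm p), Finset.sum_add_distrib,
      Finset.sum_add_distrib]
    congr 1
    · congr 1
      · rw [Finset.sum_eq_single i]
        · rw [if_pos rfl, hAa]
        · intro q _ hq; simp [hq]
        · simp
      · by_cases h : (i : ℕ) + 1 < l
        · rw [Finset.sum_eq_single (⟨(i : ℕ) + 1, h⟩ : Fin l)]
          · simp [hA, h]
          · intro q _ hq
            have : (q : ℕ) ≠ (i : ℕ) + 1 := by
              intro hc; exact hq (Fin.ext hc)
            simp [this]
          · simp
        · rw [Finset.sum_eq_zero, show A ((i : ℕ) + 1) = 0 by simp [hA, h]]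
          · simp
          intro q _
          have : (q : ℕ) ≠ (i : ℕ) + 1 := by
            have := q.isLt; omega
          simp [this]
    · by_cases h0 : (i : ℕ) = 0
      · rw [Finset.sum_eq_zero, if_pos h0]
        · simp
        intro q _
        have : ¬ ((q : ℕ) + 1 = (i : ℕ)) := by omega
        simp [this]
      · have hlt : (i : ℕ) - 1 < l := by have := i.isLt; omega
        rw [Finset.sum_eq_single (⟨(i : ℕ) - 1, hlt⟩ : Fin l)]
        · rw [if_neg h0]
          simp only [hA]
          rw [dif_pos hlt]
          have : ((⟨(i : ℕ) - 1, hlt⟩ : Fin l) : ℕ) + 1 = (i : ℕ) := by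
            simp; omega
          simp [this]
        · intro q _ hq
          have : ¬ ((q : ℕ) + 1 = (i : ℕ)) := by
            intro hc
            exact hq (Fin.ext (by simp; omega))
          simp [this]
        · simp
  -- the linear relations
  have rel : ∀ i : Fin l,
      (if (i : ℕ) = l - 1 then 1 else 2) * A (i : ℕ)
        = A ((i : ℕ) + 1) + (if (i : ℕ) = 0 then 0 else A ((i : ℕ) - 1)) := by
    intro i
    have := hSval i
    rw [hSz i] at this
    linarith [this.symm.le, this.symm.ge]
  -- A n = (n+1) * A 0 for n < l
  have key : ∀ n, n < l → A n = ((n : ℤ) + 1) * A 0 := by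
    intro n
    induction n using Nat.strong_induction_on with
    | _ n ih =>
      intro hn
      rcases n with _ | m
      · simp
      · have hm : m < l := by omega
        have hmne : ¬ (m = l - 1) := by omega
        have hrel := rel ⟨m, hm⟩
        simp only [Fin.val_mk] at hrel
        rw [if_neg hmne] at hrel
        rcases m with _ | k
        · norm_num at hrel
          have h1 : A 1 = 2 * A 0 := by omega
          rw [h1]; push_cast; ring
        · have hk : ¬ (k + 1 = 0) := by omega
          rw [if_neg hk] at hrel
          have hs : k + 1 - 1 = k := by omega
          rw [hs] at hrel
          have e1 : A (k + 1) = ((k : ℤ) + 1 + 1) * A 0 := ih (k + 1) (by omega) (by omega)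
          have e2 : A k = ((k : ℤ) + 1) * A 0 := ih k (by omega) (by omega)
          have h1 : A (k + 1 + 1) = 2 * A (k + 1) - A k := by omega
          rw [h1, e1, e2]; push_cast; ring
  -- A 0 = 0
  have hA0 : A 0 = 0 := by
    rcases Nat.lt_or_ge l 2 with h2' | h2'
    · have hl1 : l = 1 := by omega
      subst hl1
      have hrel := rel ⟨0, by omega⟩
      simp only [Fin.val_mk] at hrel
      norm_num at hrel
      have hA1 : A 1 = 0 := by simp [hA]
      omega
    · obtain ⟨k, hk⟩ : ∃ k, l = k + 2 := ⟨l - 2, by omega⟩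
      subst hk
      have hrel := rel ⟨k + 1, by omega⟩
      simp only [Fin.val_mk] at hrel
      have c1 : k + 1 = k + 2 - 1 := by omega
      have c2 : ¬ (k + 1 = 0) := by omega
      rw [if_pos c1, if_neg c2] at hrel
      have hAl : A (k + 1 + 1) = 0 := by
        have hnl : ¬ (k + 1 + 1 < k + 2) := by omega
        simp [hA, hnl]
      have hs : k + 1 - 1 = k := by omega
      rw [hs, hAl] at hrel
      have e1 : A (k + 1) = ((k : ℤ) + 1 + 1) * A 0 := by
        have := key (k + 1) (by omega)
        rw [this]; push_cast; ring
      have e2 : A k = ((k : ℤ) + 1) * A 0 := key k (by omega)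
      rw [e1, e2] at hrel
      linarith
  funext i
  have := key (i : ℕ) i.isLt
  rw [hA0, mul_zero] at this
  rw [← hAa i, this]
  rfl
end
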